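/- arXiv:2111.05127 — 4 statements merged into one kernel-verified Lean document; each statement's English description precedes it below -/
import Mathlib

section
/- Let H be a Hurst exponent with 0 < H < 1, let t > 0, and let f_t be the FIM density at time t. Then for every real exponent q with q > 1 − 1/H, the absolute moment of order q is ∫_{−∞}^{∞} |x|^q · f_t(x) dx = (t/(2H²))^{qH} · Γ(1 + (q−1)H) / Γ(1−H). In particular, for q = 1/H this gives ∫ |x|^{1/H} f_t(x) dx = t·(1−H)/(2H²), and for q = 2 it gives the mean square displacement ∫ x² f_t(x) dx = (t/(2H²))^{2H} · Γ(1+H)/Γ(1−H). -/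
open MeasureTheory Real

/-- The FIM density at time `t` with Hurst exponent `H`. -/
noncomputable def fimDensity (H t x : ℝ) : ℝ :=
  (1 / (2 * H * Real.Gamma (1 - H))) * (2 * H ^ 2 / t) ^ (1 - H) *
    Real.exp (-(2 * H ^ 2 / t) * |x| ^ (1 / H)) * |x| ^ (1 / H - 2)

lemma fimDensity_moment_aux (H t q : ℝ) (hH0 : 0 < H) (hH1 : H < 1) (ht : 0 < t)
    (hq : 1 - 1 / H < q) :
    ∫ x : ℝ, |x| ^ q * fimDensity H t x =
      (t / (2 * H ^ 2)) ^ (q * H) * Real.Gamma (1 + (q - 1) * H) / Real.Gamma (1 - H) := by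
  have hb : (0:ℝ) < 2 * H ^ 2 / t := by positivity
  have hp : (0:ℝ) < 1 / H := by positivity
  have hq' : (-1:ℝ) < q + (1 / H - 2) := by linarith
  have hΓpos : 0 < Real.Gamma (1 - H) := Real.Gamma_pos_of_pos (by linarith)
  set C : ℝ := 1 / (2 * H * Real.Gamma (1 - H)) * (2 * H ^ 2 / t) ^ (1 - H) with hC
  set b : ℝ := 2 * H ^ 2 / t with hbdef
  calc ∫ x : ℝ, |x| ^ q * fimDensity H t x
      = ∫ x : ℝ, (fun y : ℝ => C * (y ^ q * y ^ (1 / H - 2) * Real.exp (-b * y ^ (1 / H)))) |x| := by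
        congr 1; funext x; simp only [fimDensity, hC, hbdef]; ring
    _ = 2 * ∫ y in Set.Ioi (0:ℝ), C * (y ^ q * y ^ (1 / H - 2) * Real.exp (-b * y ^ (1 / H))) :=
        integral_comp_abs (f := fun y : ℝ => C * (y ^ q * y ^ (1 / H - 2) * Real.exp (-b * y ^ (1 / H))))
    _ = 2 * (C * ∫ y in Set.Ioi (0:ℝ), y ^ (q + (1 / H - 2)) * Real.exp (-b * y ^ (1 / H))) := by
        rw [← MeasureTheory.integral_const_mul, ← MeasureTheory.integral_const_mul,
          ← MeasureTheory.integral_const_mul]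
        refine setIntegral_congr_fun measurableSet_Ioi (fun y hy => ?_)
        rw [Real.rpow_add hy]
    _ = 2 * (C * (b ^ (-(q + (1 / H - 2) + 1) / (1 / H)) * (1 / (1 / H)) *
          Real.Gamma ((q + (1 / H - 2) + 1) / (1 / H)))) := by
        rw [integral_rpow_mul_exp_neg_mul_rpow hp hq' hb]
    _ = (t / (2 * H ^ 2)) ^ (q * H) * Real.Gamma (1 + (q - 1) * H) / Real.Gamma (1 - H) := by
        have hΓarg : (q + (1 / H - 2) + 1) / (1 / H) = 1 + (q - 1) * H := by
          field_simp; ring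
        have hbpow : b ^ (1 - H) * b ^ (-(q + (1 / H - 2) + 1) / (1 / H)) =
            (t / (2 * H ^ 2)) ^ (q * H) := by
          rw [← Real.rpow_add hb,
            show 1 - H + -(q + (1 / H - 2) + 1) / (1 / H) = -(q * H) by field_simp; ring,
            Real.rpow_neg hb.le, ← Real.inv_rpow hb.le, hbdef, inv_div]
        rw [hΓarg, one_div_one_div, hC, ← hbpow]
        field_simp

/-- absolute moments of the FIM density, with the two particular
cases `q = 1/H` and `q = 2`. -/
theorem fimDensity_abs_moment (H t : ℝ) (hH0 : 0 < H) (hH1 : H < 1) (ht : 0 < t) :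
    (∀ q : ℝ, 1 - 1 / H < q →
      ∫ x : ℝ, |x| ^ q * fimDensity H t x =
        (t / (2 * H ^ 2)) ^ (q * H) * Real.Gamma (1 + (q - 1) * H) / Real.Gamma (1 - H)) ∧
    (∫ x : ℝ, |x| ^ (1 / H) * fimDensity H t x = t * (1 - H) / (2 * H ^ 2)) ∧
    (∫ x : ℝ, x ^ 2 * fimDensity H t x =
      (t / (2 * H ^ 2)) ^ (2 * H) * Real.Gamma (1 + H) / Real.Gamma (1 - H)) := by
  have hp : (0:ℝ) < 1 / H := by positivity
  have hΓpos : 0 < Real.Gamma (1 - H) := Real.Gamma_pos_of_pos (by linarith)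
  refine ⟨fun q hq => fimDensity_moment_aux H t q hH0 hH1 ht hq, ?_, ?_⟩
  · have h1H : 1 < 1 / H := by rw [lt_div_iff₀ hH0]; linarith
    have h := fimDensity_moment_aux H t (1 / H) hH0 hH1 ht (by linarith)
    rw [show (1 / H) * H = 1 by field_simp, Real.rpow_one,
      show 1 + (1 / H - 1) * H = (1 - H) + 1 by field_simp; ring,
      Real.Gamma_add_one (by linarith : (1:ℝ) - H ≠ 0)] at h
    rw [h]; field_simp
  · have h := fimDensity_moment_aux H t 2 hH0 hH1 ht (by linarith)
    have hx : ∀ x : ℝ, x ^ 2 = |x| ^ (2:ℝ) := by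
      intro x
      rw [show (2:ℝ) = ((2:ℕ):ℝ) by norm_num, Real.rpow_natCast, sq_abs]
    simp_rw [hx]
    rw [h]
    norm_num
end

section
/- Let H be a Hurst exponent with 0 < H < 1 and let f_1 be the FIM density at time 1. Setting m_1 = ∫_{−∞}^{∞} |x| · f_1(x) dx and m_2 = ∫_{−∞}^{∞} x² · f_1(x) dx, the CV inequality score satisfies 1 − m_1²/m_2 = 1 − sin(πH)/(πH). -/
open MeasureTheory Real

/-- the CV inequality score of the FIM displacement `|I_H(1)|`. -/
theorem fimDensity_cv_score (H : ℝ) (hH0 : 0 < H) (hH1 : H < 1)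
    (m₁ m₂ : ℝ)
    (hm₁ : m₁ = ∫ x : ℝ, |x| * fimDensity H 1 x)
    (hm₂ : m₂ = ∫ x : ℝ, x ^ 2 * fimDensity H 1 x) :
    1 - m₁ ^ 2 / m₂ = 1 - Real.sin (π * H) / (π * H) := by
  have hH : H ≠ 0 := ne_of_gt hH0
  have hp : (0:ℝ) < 1 / H := by positivity
  have hb : (0:ℝ) < 2 * H ^ 2 / 1 := by positivity
  set c : ℝ := 2 * H ^ 2 / 1 with hc
  set K : ℝ := (1 / (2 * H * Real.Gamma (1 - H))) * c ^ (1 - H) with hK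
  -- First moment
  have e₁ : m₁ = 2 * (K * (c ^ (-(1/H - 1 + 1)/(1/H)) * (1/(1/H)) *
      Real.Gamma ((1/H - 1 + 1)/(1/H)))) := by
    rw [hm₁]
    have h1 : (fun x : ℝ => |x| * fimDensity H 1 x)
        = fun x : ℝ => (fun y : ℝ => y * fimDensity H 1 y) |x| := by
      funext x
      simp only [fimDensity, abs_abs]
    rw [h1, integral_comp_abs (f := fun y : ℝ => y * fimDensity H 1 y)]
    congr 1
    have h2 : ∫ x in Set.Ioi (0:ℝ), x * fimDensity H 1 x
        = ∫ x in Set.Ioi (0:ℝ), K * (x ^ (1/H - 1) * Real.exp (-c * x ^ (1/H))) := by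
      refine setIntegral_congr_fun measurableSet_Ioi (fun x hx => ?_)
      have hx0 : (0:ℝ) < x := hx
      rw [fimDensity, abs_of_pos hx0,
        show (1/H - 1) = (1/H - 2) + 1 by ring, Real.rpow_add hx0, Real.rpow_one]
      ring
    rw [h2, integral_const_mul,
      integral_rpow_mul_exp_neg_mul_rpow hp (by linarith) hb]
  have e₂ : m₂ = 2 * (K * (c ^ (-(1/H + 1)/(1/H)) * (1/(1/H)) *
      Real.Gamma ((1/H + 1)/(1/H)))) := by
    rw [hm₂]
    have h1 : (fun x : ℝ => x ^ 2 * fimDensity H 1 x)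
        = fun x : ℝ => (fun y : ℝ => y ^ 2 * fimDensity H 1 y) |x| := by
      funext x
      simp only [fimDensity, abs_abs, sq_abs]
    rw [h1, integral_comp_abs (f := fun y : ℝ => y ^ 2 * fimDensity H 1 y)]
    congr 1
    have h2 : ∫ x in Set.Ioi (0:ℝ), x ^ 2 * fimDensity H 1 x
        = ∫ x in Set.Ioi (0:ℝ), K * (x ^ (1/H) * Real.exp (-c * x ^ (1/H))) := by
      refine setIntegral_congr_fun measurableSet_Ioi (fun x hx => ?_)
      have hx0 : (0:ℝ) < x := hx
      rw [fimDensity, abs_of_pos hx0,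
        show (1/H : ℝ) = (1/H - 2) + 2 by ring, Real.rpow_add hx0]
      rw [show ((2:ℝ)) = ((2:ℕ):ℝ) by norm_num, Real.rpow_natCast]
      simp only [hK, hc, Nat.cast_ofNat]
      ring
    rw [h2, integral_const_mul,
      integral_rpow_mul_exp_neg_mul_rpow hp (by linarith) hb]
  -- simplify exponents
  have hq1 : (-(1/H - 1 + 1)/(1/H)) = (-1 : ℝ) := by
    field_simp
    ring
  have hq1' : ((1/H - 1 + 1)/(1/H)) = (1 : ℝ) := by
    field_simp
    ring
  have hq2 : (-(1/H + 1)/(1/H)) = -(1 + H) := by field_simp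
  have hq2' : ((1/H + 1)/(1/H)) = 1 + H := by field_simp
  have hinv : (1/(1/H) : ℝ) = H := by field_simp
  rw [hq1, hq1', Real.Gamma_one, hinv] at e₁
  rw [hq2, hq2', hinv] at e₂
  -- Gamma facts
  have hG1 : Real.Gamma (1 + H) = H * Real.Gamma H := by
    rw [add_comm, Real.Gamma_add_one hH]
  have hGpos : 0 < Real.Gamma H := Real.Gamma_pos_of_pos hH0
  have hG2pos : 0 < Real.Gamma (1 - H) := Real.Gamma_pos_of_pos (by linarith)
  have hrefl : Real.Gamma H * Real.Gamma (1 - H) = π / Real.sin (π * H) :=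
    Real.Gamma_mul_Gamma_one_sub H
  have hsin : 0 < Real.sin (π * H) :=
    Real.sin_pos_of_pos_of_lt_pi (by positivity)
      (by nlinarith [Real.pi_pos])
  have hsin' : Real.sin (π * H) = π / (Real.Gamma H * Real.Gamma (1 - H)) := by
    rw [hrefl]
    field_simp
  have hcpos : (0:ℝ) < c := hb
  have hcne : c ≠ 0 := ne_of_gt hcpos
  have hGne : Real.Gamma H ≠ 0 := ne_of_gt hGpos
  have hG2ne : Real.Gamma (1 - H) ≠ 0 := ne_of_gt hG2pos
  have hm1 : m₁ = c ^ (-H) / Real.Gamma (1 - H) := by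
    rw [e₁, hK, show (-H : ℝ) = (1 - H) + (-1) by ring, Real.rpow_add hcpos]
    field_simp
  have hm2 : m₂ = c ^ (-(2*H)) * (H * Real.Gamma H) / Real.Gamma (1 - H) := by
    rw [e₂, hK, hG1, show (-(2*H) : ℝ) = (1 - H) + (-(1 + H)) by ring,
      Real.rpow_add hcpos]
    field_simp
  have hsq : (c ^ (-H)) ^ 2 = c ^ (-(2*H)) := by
    rw [← Real.rpow_natCast (c ^ (-H)) 2, ← Real.rpow_mul hcpos.le]
    congr 1
    push_cast
    ring
  have hcH : c ^ (-(2*H)) ≠ 0 := ne_of_gt (Real.rpow_pos_of_pos hcpos _)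
  have hπ : (π : ℝ) ≠ 0 := Real.pi_ne_zero
  have key : m₁ ^ 2 / m₂ = Real.sin (π * H) / (π * H) := by
    rw [hm1, hm2, hsin', div_pow, hsq]
    field_simp
  rw [key]
end

section
/- Let H be a Hurst exponent with 0 < H < 1, let t > 0, and let f_t and f_1 be the FIM densities at times t and 1. Then the Kullback–Leibler divergence of f_t from f_1 equals ∫_{−∞}^{∞} ln(f_t(x)/f_1(x)) · f_t(x) dx = (1 − H)·(t − 1 − ln t). -/
open MeasureTheory Real

open Set in
lemma fim_integrable_of_abs_comp {f : ℝ → ℝ} (hf : IntegrableOn f (Ioi 0)) :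
    Integrable (fun x : ℝ => f |x|) := by
  have hIoi : IntegrableOn (fun x : ℝ => f |x|) (Ioi 0) :=
    hf.congr_fun (fun x hx => by rw [abs_of_pos hx]) measurableSet_Ioi
  have hIic : IntegrableOn (fun x : ℝ => f |x|) (Iic 0) := by
    rw [← Measure.map_neg_eq_self (volume : Measure ℝ)]
    have m : MeasurableEmbedding fun x : ℝ => -x := (Homeomorph.neg ℝ).measurableEmbedding
    rw [m.integrableOn_map_iff]
    simp_rw [Function.comp_def, abs_neg, neg_preimage, neg_Iic, neg_zero]
    exact Iff.mpr integrableOn_Ici_iff_integrableOn_Ioi hIoi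
  rw [← integrableOn_univ, ← Iic_union_Ioi (a := (0:ℝ))]
  exact integrableOn_union.mpr ⟨hIic, hIoi⟩

lemma fim_integrable_absPow {p q b : ℝ} (hq : -1 < q) (hp : 1 ≤ p) (hb : 0 < b) :
    Integrable (fun x : ℝ => |x| ^ q * Real.exp (-b * |x| ^ p)) :=
  fim_integrable_of_abs_comp (f := fun x => x ^ q * Real.exp (-b * x ^ p))
    (integrableOn_rpow_mul_exp_neg_mul_rpow hq (by linarith) hb)

open Set in
lemma fim_integral_absPow {p q b : ℝ} (hq : -1 < q) (hp : 0 < p) (hb : 0 < b) :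
    ∫ x : ℝ, |x| ^ q * Real.exp (-b * |x| ^ p)
      = 2 * (b ^ (-(q + 1) / p) * (1 / p) * Real.Gamma ((q + 1) / p)) := by
  have h := integral_comp_abs (f := fun y : ℝ => y ^ q * Real.exp (-b * y ^ p))
  rw [h, integral_rpow_mul_exp_neg_mul_rpow hp hq hb]

/-- the Kullback-Leibler divergence of the FIM position at time `t`
from the FIM position at time `1`. -/
theorem fim_kl_divergence (H t : ℝ) (hH0 : 0 < H) (hH1 : H < 1) (ht : 0 < t) :
    ∫ x : ℝ, Real.log (fimDensity H t x / fimDensity H 1 x) * fimDensity H t x =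
      (1 - H) * (t - 1 - Real.log t) := by
  have hH1' : (0:ℝ) < 1 - H := by linarith
  have hΓ : 0 < Real.Gamma (1 - H) := Real.Gamma_pos_of_pos hH1'
  have hHne : H ≠ 0 := ne_of_gt hH0
  have hp1 : (1:ℝ) < 1 / H := one_lt_one_div hH0 hH1
  have hp0 : (0:ℝ) < 1 / H := by positivity
  have hq : (-1:ℝ) < 1 / H - 2 := by linarith
  have hq2 : (-1:ℝ) < 1 / H - 2 + 1 / H := by linarith
  set b : ℝ := 2 * H ^ 2 / t with hbdef
  have hb : 0 < b := by positivity
  have hb1 : (0:ℝ) < 2 * H ^ 2 := by positivity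
  set C : ℝ := 1 / (2 * H * Real.Gamma (1 - H)) with hCdef
  have hC : 0 < C := by positivity
  set K : ℝ := C * b ^ (1 - H) with hKdef
  have hK : 0 < K := by positivity
  have hft : ∀ x : ℝ, fimDensity H t x
      = K * (|x| ^ (1/H - 2) * Real.exp (-b * |x| ^ (1/H))) := by
    intro x; simp only [fimDensity, hKdef, hCdef, hbdef]; ring
  -- integrability
  have hint1 : Integrable (fun x : ℝ => |x| ^ (1/H-2) * Real.exp (-b * |x| ^ (1/H))) :=
    fim_integrable_absPow hq hp1.le hb
  have hint2 : Integrable (fun x : ℝ => |x| ^ (1/H-2+1/H) * Real.exp (-b * |x| ^ (1/H))) :=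
    fim_integrable_absPow hq2 hp1.le hb
  have hift : Integrable (fun x : ℝ => fimDensity H t x) := by
    rw [funext hft]; exact hint1.const_mul K
  have habs : ∀ x : ℝ, |x| ^ (1/H : ℝ) * fimDensity H t x
      = K * (|x| ^ (1/H-2+1/H) * Real.exp (-b * |x| ^ (1/H))) := by
    intro x
    rcases eq_or_ne x 0 with rfl | hx
    · have h1 : (1/H : ℝ) ≠ 0 := ne_of_gt hp0
      have h2 : (1/H - 2 + 1/H : ℝ) ≠ 0 := ne_of_gt (by linarith)
      rw [abs_zero, Real.zero_rpow h1, Real.zero_rpow h2]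
      simp
    · rw [hft, Real.rpow_add (abs_pos.mpr hx)]; ring
  have hift2 : Integrable (fun x : ℝ => |x| ^ (1/H : ℝ) * fimDensity H t x) := by
    rw [funext habs]; exact hint2.const_mul K
  -- a.e. rewrite of the integrand
  have h0 : ∀ᵐ x : ℝ, x ≠ 0 := by
    filter_upwards [compl_mem_ae_iff.mpr (measure_singleton (0:ℝ))] with x hx
    simpa using hx
  have hae : (fun x : ℝ => Real.log (fimDensity H t x / fimDensity H 1 x) * fimDensity H t x)
      =ᵐ[volume] fun x => (H - 1) * Real.log t * fimDensity H t x
        + (2 * H ^ 2 - b) * (|x| ^ (1/H : ℝ) * fimDensity H t x) := by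
    filter_upwards [h0] with x hx
    have hax : 0 < |x| := abs_pos.mpr hx
    set A : ℝ := |x| ^ (1/H : ℝ) with hA
    have hApos : 0 < A := Real.rpow_pos_of_pos hax _
    have hD : 0 < |x| ^ (1/H - 2 : ℝ) := Real.rpow_pos_of_pos hax _
    have hf1 : fimDensity H 1 x
        = C * (2*H^2) ^ (1 - H) * Real.exp (-(2*H^2) * A) * |x| ^ (1/H - 2) := by
      simp only [fimDensity, hCdef, div_one, hA]
    have hf1pos : 0 < fimDensity H 1 x := by rw [hf1]; positivity
    have e1 : b ^ (1-H) = (2*H^2) ^ (1-H) * t ^ (H-1) := by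
      rw [hbdef, Real.div_rpow hb1.le ht.le, div_eq_mul_inv, ← Real.rpow_neg ht.le, neg_sub]
    have e2 : Real.exp ((2*H^2 - b) * A) * Real.exp (-(2*H^2) * A) = Real.exp (-b * A) := by
      rw [← Real.exp_add]; congr 1; ring
    have hratio : fimDensity H t x / fimDensity H 1 x
        = t ^ (H - 1) * Real.exp ((2*H^2 - b) * A) := by
      rw [div_eq_iff (ne_of_gt hf1pos), hft x, hKdef, hf1, e1, ← e2]
      ring
    rw [hratio, Real.log_mul (ne_of_gt (Real.rpow_pos_of_pos ht _)) (Real.exp_ne_zero _),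
      Real.log_rpow ht, Real.log_exp]
    ring
  rw [integral_congr_ae hae,
    integral_add ((hift.const_mul _)) (hift2.const_mul _),
    integral_const_mul, integral_const_mul]
  -- first integral: total mass is 1
  have I1 : ∫ x : ℝ, fimDensity H t x = 1 := by
    rw [funext hft, integral_const_mul, fim_integral_absPow hq hp0 hb]
    have eA : (1/H - 2 + 1)/(1/H) = 1 - H := by field_simp; ring
    have eB : -(1/H - 2 + 1)/(1/H) = H - 1 := by field_simp; ring
    have ebb : b ^ (1-H : ℝ) * b ^ (H-1 : ℝ) = 1 := by
      rw [← Real.rpow_add hb]; norm_num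
    rw [eA, eB, one_div_one_div]
    calc K * (2 * (b ^ (H - 1 : ℝ) * H * Real.Gamma (1 - H)))
        = (b ^ (1-H : ℝ) * b ^ (H-1 : ℝ)) * ((2 * H * Real.Gamma (1-H)) * C) := by
          rw [hKdef]; ring
      _ = 1 := by rw [ebb, hCdef, one_mul]; field_simp
  -- second integral: first moment of |x|^{1/H}
  have I2 : ∫ x : ℝ, |x| ^ (1/H : ℝ) * fimDensity H t x = (1 - H) / b := by
    rw [funext habs, integral_const_mul, fim_integral_absPow hq2 hp0 hb]
    have eA : (1/H - 2 + 1/H + 1)/(1/H) = 2 - H := by field_simp; ring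
    have eB : -(1/H - 2 + 1/H + 1)/(1/H) = H - 2 := by field_simp; ring
    have hΓ2 : Real.Gamma (2 - H) = (1 - H) * Real.Gamma (1 - H) := by
      rw [show (2:ℝ) - H = (1 - H) + 1 by ring, Real.Gamma_add_one (ne_of_gt hH1')]
    have ebb : b ^ (1-H : ℝ) * b ^ (H-2 : ℝ) = b⁻¹ := by
      rw [← Real.rpow_add hb, show (1-H) + (H-2) = (-1 : ℝ) by ring, Real.rpow_neg_one]
    rw [eA, eB, one_div_one_div, hΓ2]
    calc K * (2 * (b ^ (H - 2 : ℝ) * H * ((1 - H) * Real.Gamma (1 - H))))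
        = (b ^ (1-H : ℝ) * b ^ (H-2 : ℝ)) * ((2 * H * Real.Gamma (1-H)) * C) * (1 - H) := by
          rw [hKdef]; ring
      _ = (1 - H) / b := by
          rw [ebb, hCdef]
          field_simp
  rw [I1, I2, hbdef]
  field_simp
  ring
end

section
/- Let H with 0 < H < 1/2 and t > 0, and let p(x) = (1/(2H·Γ(1−H))) · (2H²/t)^{1−H} · exp(−(2H²/t)·x^{1/H}) · x^{1/H−2} for x > 0 be the restriction of the FIM density at time t to the positive half-line. Then p(x) → 0 as x → 0⁺, p(x) → 0 as x → ∞, and with x* = ((1−2H)·t/(2H²))^H, p is strictly increasing on (0, x*) and strictly decreasing on (x*, ∞); in particular the density is bimodal on ℝ, with modes at ±x* and value 0 approached at the origin. -/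
open Real Filter

lemma fim_hasDerivAt (a b c C x : ℝ) (hx : 0 < x) :
    HasDerivAt (fun y => C * Real.exp (-a * y ^ b) * y ^ c)
      (C * Real.exp (-a * x ^ b) * x ^ (c - 1) * (c - a * b * x ^ b)) x := by
  have h1 : HasDerivAt (fun y : ℝ => y ^ b) (b * x ^ (b - 1)) x :=
    Real.hasDerivAt_rpow_const (Or.inl hx.ne')
  have h3 : HasDerivAt (fun y => Real.exp (-a * y ^ b))
      (Real.exp (-a * x ^ b) * (-a * (b * x ^ (b - 1)))) x := (h1.const_mul (-a)).exp
  have h4 : HasDerivAt (fun y : ℝ => y ^ c) (c * x ^ (c - 1)) x :=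
    Real.hasDerivAt_rpow_const (Or.inl hx.ne')
  have h5 := (h3.const_mul C).mul h4
  refine h5.congr_deriv ?_
  have e : x ^ (b - 1) * x ^ c = x ^ b * x ^ (c - 1) := by
    rw [← Real.rpow_add hx, ← Real.rpow_add hx]; ring_nf
  linear_combination (-(a * b * C * Real.exp (-a * x ^ b))) * e

/-- in the sub-diffusive range `0 < H < 1/2`, the positive-half-line
restriction of the FIM density vanishes at the origin and at infinity, and is
unimodal on `(0,∞)` with mode `x* = ((1−2H)t/(2H²))^H` (hence the full density
is bimodal with modes `±x*`). -/
theorem fim_density_bimodal (H t : ℝ) (hH0 : 0 < H) (hH1 : H < 1 / 2) (ht : 0 < t)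
    (p : ℝ → ℝ)
    (hp : ∀ x : ℝ, p x = (1 / (2 * H * Real.Gamma (1 - H))) * (2 * H ^ 2 / t) ^ (1 - H) *
      Real.exp (-(2 * H ^ 2 / t) * x ^ (1 / H)) * x ^ (1 / H - 2))
    (xstar : ℝ) (hxstar : xstar = ((1 - 2 * H) * t / (2 * H ^ 2)) ^ H) :
    Tendsto p (nhdsWithin 0 (Set.Ioi 0)) (nhds 0) ∧
    Tendsto p atTop (nhds 0) ∧
    StrictMonoOn p (Set.Ioo 0 xstar) ∧
    StrictAntiOn p (Set.Ioi xstar) := by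
  set a : ℝ := 2 * H ^ 2 / t with ha_def
  set b : ℝ := 1 / H with hb_def
  set c : ℝ := 1 / H - 2 with hc_def
  set C : ℝ := (1 / (2 * H * Real.Gamma (1 - H))) * (2 * H ^ 2 / t) ^ (1 - H) with hC_def
  have ha : 0 < a := by positivity
  have hb0 : 0 < b := by positivity
  have hb2 : 2 < b := by
    rw [hb_def, lt_div_iff₀ hH0]; linarith
  have hc : 0 < c := by simp only [hc_def]; linarith [hb2]
  have hC : 0 < C := by
    have hg : 0 < Real.Gamma (1 - H) := Real.Gamma_pos_of_pos (by linarith)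
    rw [hC_def]; positivity
  have hpf : p = fun x => C * Real.exp (-a * x ^ b) * x ^ c := funext hp
  -- key constant
  have hK : 0 < (1 - 2 * H) * t / (2 * H ^ 2) := by
    have : 0 < 1 - 2 * H := by linarith
    positivity
  have hxs0 : 0 < xstar := by rw [hxstar]; positivity
  have hxsb : a * b * xstar ^ b = c := by
    rw [hxstar, ← Real.rpow_mul hK.le]
    have : H * b = 1 := by rw [hb_def]; field_simp
    rw [this, Real.rpow_one]
    rw [ha_def, hb_def, hc_def]; field_simp
  -- derivative
  have hderiv : ∀ x : ℝ, 0 < x →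
      HasDerivAt p (C * Real.exp (-a * x ^ b) * x ^ (c - 1) * (c - a * b * x ^ b)) x := by
    intro x hx
    rw [hpf]; exact fim_hasDerivAt a b c C x hx
  refine ⟨?_, ?_, ?_, ?_⟩
  · -- tendsto at 0+
    rw [hpf]
    have h1 : ContinuousAt (fun x : ℝ => C * Real.exp (-a * x ^ b) * x ^ c) 0 := by
      have hxb : ContinuousAt (fun x : ℝ => x ^ b) 0 :=
        Real.continuousAt_rpow_const 0 b (Or.inr hb0.le)
      have hxc : ContinuousAt (fun x : ℝ => x ^ c) 0 :=
        Real.continuousAt_rpow_const 0 c (Or.inr hc.le)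
      exact ((Real.continuous_exp.continuousAt.comp ((hxb.const_mul (-a)))).const_mul C).mul hxc
    have := h1.tendsto.mono_left (nhdsWithin_le_nhds (s := Set.Ioi (0:ℝ)))
    simpa [Real.zero_rpow hc.ne', Real.zero_rpow (by positivity : b ≠ 0)] using this
  · -- tendsto atTop
    rw [hpf]
    have key : Tendsto (fun u : ℝ => u ^ (c / b) * Real.exp (-a * u)) atTop (nhds 0) :=
      tendsto_rpow_mul_exp_neg_mul_atTop_nhds_zero (c / b) a ha
    have comp := key.comp (tendsto_rpow_atTop hb0)
    have heq : (fun x : ℝ => ((fun u : ℝ => u ^ (c / b) * Real.exp (-a * u)) ∘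
        fun x : ℝ => x ^ b) x) =ᶠ[atTop] fun x => Real.exp (-a * x ^ b) * x ^ c := by
      filter_upwards [eventually_gt_atTop 0] with x hx
      simp only [Function.comp]
      rw [← Real.rpow_mul hx.le]
      have : b * (c / b) = c := by field_simp
      rw [this, mul_comm]
    have h2 : Tendsto (fun x : ℝ => Real.exp (-a * x ^ b) * x ^ c) atTop (nhds 0) :=
      comp.congr' heq
    have := h2.const_mul C
    simpa [mul_assoc] using this
  · -- strict mono on Ioo 0 xstar
    apply strictMonoOn_of_deriv_pos (convex_Ioo 0 xstar)
    · exact fun x hx => ((hderiv x hx.1).continuousAt).continuousWithinAt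
    · intro x hx
      rw [interior_Ioo] at hx
      have hx0 : 0 < x := hx.1
      have hd := (hderiv x hx0).deriv
      rw [hd]
      have hxb : x ^ b < xstar ^ b :=
        Real.rpow_lt_rpow hx0.le hx.2 hb0
      have : a * b * x ^ b < c := by
        calc a * b * x ^ b < a * b * xstar ^ b := by
              apply mul_lt_mul_of_pos_left hxb (by positivity)
          _ = c := hxsb
      have h1 : 0 < x ^ (c - 1) := Real.rpow_pos_of_pos hx0 _
      have h2 : 0 < Real.exp (-a * x ^ b) := Real.exp_pos _
      have h3 : 0 < c - a * b * x ^ b := by linarith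
      positivity
  · -- strict anti on Ioi xstar
    apply strictAntiOn_of_deriv_neg (convex_Ioi xstar)
    · exact fun x hx => ((hderiv x (lt_trans hxs0 hx)).continuousAt).continuousWithinAt
    · intro x hx
      rw [interior_Ioi] at hx
      have hx0 : 0 < x := lt_trans hxs0 hx
      rw [(hderiv x hx0).deriv]
      have hxb : xstar ^ b < x ^ b :=
        Real.rpow_lt_rpow hxs0.le hx hb0
      have hlt : c < a * b * x ^ b := by
        calc c = a * b * xstar ^ b := hxsb.symm
          _ < a * b * x ^ b := by apply mul_lt_mul_of_pos_left hxb (by positivity)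
      have h1 : 0 < x ^ (c - 1) := Real.rpow_pos_of_pos hx0 _
      have h2 : 0 < Real.exp (-a * x ^ b) := Real.exp_pos _
      have hneg : c - a * b * x ^ b < 0 := by linarith
      have : 0 < C * Real.exp (-a * x ^ b) * x ^ (c - 1) := by positivity
      nlinarith
end
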